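/- arXiv:2512.02083 — 2 statements merged into one kernel-verified Lean document; each statement's English description precedes it below -/
import Mathlib

section
/- Let G be a finite simple graph, let r be a vertex of degree 1 whose unique neighbor is v, and let f be a signed Roman dominating function on G with f(v) = −1 and f(r) = 2. Then the function g defined by g(v) = 2, g(r) = −1, and g(u) = f(u) for every other vertex u is also a signed Roman dominating function on G, and g has the same weight as f. -/
open scoped Classical

noncomputable section

/-- Sum of `f` over the closed neighborhood of `u`. -/
def closedNbrSum {V : Type*} [Fintype V] (G : SimpleGraph V) (f : V → ℤ) (u : V) : ℤ :=
  f u + ∑ v ∈ Finset.univ.filter (fun v => G.Adj u v), f v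

/-- A signed Roman dominating function. -/
def IsSRDF {V : Type*} [Fintype V] (G : SimpleGraph V) (f : V → ℤ) : Prop :=
  (∀ v, f v = -1 ∨ f v = 1 ∨ f v = 2) ∧
  (∀ u, 1 ≤ closedNbrSum G f u) ∧
  (∀ u, f u = -1 → ∃ v, G.Adj u v ∧ f v = 2)

/-- The weight of a labeling. -/
def srdWeight {V : Type*} [Fintype V] (f : V → ℤ) : ℤ := ∑ v, f v

/-!
Swapping the labels of `r` and `v` changes the sum of `f` over a set `s` by
`3 [v ∈ s] - 3 [r ∈ s]`. Every closed neighborhood containing the pendant vertex `r` is `N[r]` or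
`N[v]`, and both contain `v`; so no closed-neighborhood sum decreases, and the total weight
(`s = V`) is unchanged. A vertex other than `r` labelled `-1` keeps its old neighbor labelled `2`,
which cannot be `r` (only `v` is adjacent to `r`), nor `v` (labelled `-1`).
-/

theorem Finset.sum_ite_eq_ite_eq {α M : Type*} [DecidableEq α] [AddCommGroup M]
    {r v : α} (hrv : r ≠ v) (s : Finset α) (f : α → M) (a b : M) :
    ∑ u ∈ s, (if u = v then a else if u = r then b else f u) =
      ∑ u ∈ s, f u + (if v ∈ s then a - f v else 0) + (if r ∈ s then b - f r else 0) := by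
  have hpointwise : ∀ u, (if u = v then a else if u = r then b else f u) =
      f u + (if v = u then a - f v else 0) + (if r = u then b - f r else 0) := by
    intro u
    by_cases huv : u = v
    · subst huv; simp [hrv]
    · by_cases hur : u = r
      · subst hur; simp [hrv, hrv.symm]
      · simp [huv, hur, Ne.symm huv, Ne.symm hur]
  simp only [hpointwise, Finset.sum_add_distrib, Finset.sum_ite_eq]

namespace SimpleGraph

variable {V : Type*} (G : SimpleGraph V)

theorem eq_of_adj_of_degree_eq_one {r v w : V} [Fintype (G.neighborSet r)]
    (hdeg : G.degree r = 1) (hv : G.Adj r v) (hw : G.Adj r w) : w = v :=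
  (degree_eq_one_iff_existsUnique_adj.mp hdeg).unique hw hv

variable [Fintype V]

theorem closedNbrSum_eq_sum_insert [DecidableEq V] (f : V → ℤ) (u : V) :
    closedNbrSum G f u = ∑ w ∈ insert u (Finset.univ.filter (G.Adj u)), f w := by
  rw [Finset.sum_insert (by simp), closedNbrSum]

theorem closedNbrSum_le_of_swap_pendant [DecidableEq V] {r v : V}
    (hdeg : G.degree r = 1) (hadj : G.Adj r v) (f : V → ℤ) (hfv : f v = -1) (hfr : f r = 2)
    (u : V) :
    closedNbrSum G f u ≤
      closedNbrSum G (fun u => if u = v then 2 else if u = r then -1 else f u) u := by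
  have hv_of_hr : r ∈ insert u (Finset.univ.filter (G.Adj u)) →
      v ∈ insert u (Finset.univ.filter (G.Adj u)) := by
    simp only [Finset.mem_insert, Finset.mem_filter, Finset.mem_univ, true_and]
    rintro (rfl | hur)
    · exact Or.inr hadj
    · exact Or.inl (G.eq_of_adj_of_degree_eq_one hdeg hadj hur.symm).symm
  rw [closedNbrSum_eq_sum_insert, closedNbrSum_eq_sum_insert,
    Finset.sum_ite_eq_ite_eq (G.ne_of_adj hadj), hfv, hfr]
  split_ifs <;> grind

theorem isSRDF_swap_pendant [DecidableEq V] {r v : V}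
    (hdeg : G.degree r = 1) (hadj : G.Adj r v) (f : V → ℤ) (hf : IsSRDF G f)
    (hfv : f v = -1) (hfr : f r = 2) :
    IsSRDF G (fun u => if u = v then 2 else if u = r then -1 else f u) := by
  obtain ⟨hvals, hsum, hdom⟩ := hf
  refine ⟨fun u => ?_,
    fun u => (hsum u).trans (G.closedNbrSum_le_of_swap_pendant hdeg hadj f hfv hfr u),
    fun u hu => ?_⟩
  · dsimp only
    split_ifs
    exacts [by simp, by simp, hvals u]
  · by_cases huv : u = v
    · simp [huv] at hu
    by_cases hur : u = r
    · exact ⟨v, hur ▸ hadj, by simp⟩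
    obtain ⟨w, huw, hw⟩ := hdom u (by simpa [huv, hur] using hu)
    have hwv : w ≠ v := by rintro rfl; simp [hfv] at hw
    have hwr : w ≠ r := by
      rintro rfl
      exact huv (G.eq_of_adj_of_degree_eq_one hdeg hadj huw.symm)
    exact ⟨w, huw, by simpa [hwv, hwr] using hw⟩

end SimpleGraph

theorem srdWeight_swap {V : Type*} [Fintype V] [DecidableEq V] {r v : V} (hrv : r ≠ v)
    (f : V → ℤ) (hfv : f v = -1) (hfr : f r = 2) :
    srdWeight (fun u => if u = v then 2 else if u = r then -1 else f u) = srdWeight f := by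
  simp only [srdWeight, Finset.sum_ite_eq_ite_eq hrv, Finset.mem_univ, if_true, hfv, hfr]
  ring

theorem swap_pendant_srdf {V : Type*} [Fintype V] [DecidableEq V]
    (G : SimpleGraph V) (r v : V)
    (hdeg : G.degree r = 1) (hadj : G.Adj r v)
    (f : V → ℤ) (hf : IsSRDF G f) (hfv : f v = -1) (hfr : f r = 2) :
    IsSRDF G (fun u => if u = v then 2 else if u = r then -1 else f u) ∧
    srdWeight (fun u => if u = v then 2 else if u = r then -1 else f u) = srdWeight f :=
  ⟨G.isSRDF_swap_pendant hdeg hadj f hf hfv hfr, srdWeight_swap (G.ne_of_adj hadj) f hfv hfr⟩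
end
end

section
/- For every MRSS construction G, there exists a minimum-weight signed Roman dominating function f on G such that for every j ∈ [k], f(v) = 2 for every vertex v ∈ F_j and f(v) = −1 for every vertex v ∈ P_j. -/
/-! Start from any minimum SRDF `g` and set it to `2` on `v_j` and on `F_j`, and to `-1` on their
pendant neighbours `r_j^2` and `P_j`. A pendant `l` with support `h` forces `g l + g h ≥ 1`, so the
loss `2 - g h` at each support is paid for by one of its own pendants, and the weight does not grow.
The result is still an SRDF: every pendant now sees a `2`, every other vertex keeps or raises its
value and has no pendant in its closed neighbourhood unless it is a support, and at `v_j` the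
`⌈|D_j|/2⌉` twos on `F_j` outweigh `-1` on every vertex of `D_j`. -/

open scoped Classical

noncomputable section

/-- The largest coordinate of a vector in `ℕ^k`. -/
def maxCoord {k : ℕ} (v : Fin k → ℕ) : ℕ := Finset.univ.sup v

/-- The size of the set `D_j`, namely `(∑ i, s_i(j)) + t(j)`. -/
def dSize {k n : ℕ} (s : Fin n → Fin k → ℕ) (t : Fin k → ℕ) (j : Fin k) : ℕ :=
  (∑ i, s i j) + t j

/-- The size of the set `F_j`, namely `⌈((∑ i, s_i(j)) + t(j))/2⌉`. -/
def fSize {k n : ℕ} (s : Fin n → Fin k → ℕ) (t : Fin k → ℕ) (j : Fin k) : ℕ :=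
  (dSize s t j + 1) / 2

/-- The vertices of the MRSS construction. -/
inductive MVert (k n : ℕ) (s : Fin n → Fin k → ℕ) (t : Fin k → ℕ) where
  | u (j : Fin k)
  | vv (j : Fin k)
  | r1 (j : Fin k)
  | r2 (j : Fin k)
  | D (j : Fin k) (d : Fin (dSize s t j))
  | F (j : Fin k) (e : Fin (fSize s t j))
  | P (j : Fin k) (e : Fin (fSize s t j)) (b : Fin 2)
  | a (i : Fin n)
  | b (i : Fin n) (l : Fin (maxCoord (s i)))
  | c (i : Fin n) (l : Fin (maxCoord (s i)))
  | Z (i : Fin n) (l : Fin (maxCoord (s i))) (z : Fin 4)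
  | w (i : Fin n) (l : Fin (maxCoord (s i)))
  | x (i : Fin n) (l : Fin (maxCoord (s i)))
  | y (i : Fin n) (l : Fin (maxCoord (s i)))
  | g (i : Fin n) (l : Fin (maxCoord (s i)))
  | h (i : Fin n) (l : Fin (maxCoord (s i)))
  | p (i : Fin n) (l : Fin (maxCoord (s i)))
  | q (i : Fin n) (l : Fin (maxCoord (s i)))
  deriving DecidableEq, Fintype

/-- Edges of the MRSS construction (up to symmetrization). -/
def mrssRel {k n : ℕ} {s : Fin n → Fin k → ℕ} {t : Fin k → ℕ}
    (sel : ∀ _ : Fin k, ∀ i : Fin n, Finset (Fin (maxCoord (s i)))) :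
    MVert k n s t → MVert k n s t → Prop
  | .u j, .r1 j' => j = j'
  | .vv j, .r2 j' => j = j'
  | .u j, .D j' _ => j = j'
  | .vv j, .D j' _ => j = j'
  | .vv j, .F j' _ => j = j'
  | .F j e, .P j' e' _ => (⟨j, e⟩ : Σ j, Fin (fSize s t j)) = ⟨j', e'⟩
  | .b i l, .c i' l' => (⟨i, l⟩ : Σ i, Fin (maxCoord (s i))) = ⟨i', l'⟩
  | .a i, .b i' _ => i = i'
  | .b i l, .Z i' l' _ => (⟨i, l⟩ : Σ i, Fin (maxCoord (s i))) = ⟨i', l'⟩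
  | .b i l, .w i' l' => (⟨i, l⟩ : Σ i, Fin (maxCoord (s i))) = ⟨i', l'⟩
  | .w i l, .x i' l' => (⟨i, l⟩ : Σ i, Fin (maxCoord (s i))) = ⟨i', l'⟩
  | .x i l, .y i' l' => (⟨i, l⟩ : Σ i, Fin (maxCoord (s i))) = ⟨i', l'⟩
  | .c i l, .g i' l' => (⟨i, l⟩ : Σ i, Fin (maxCoord (s i))) = ⟨i', l'⟩
  | .g i l, .h i' l' => (⟨i, l⟩ : Σ i, Fin (maxCoord (s i))) = ⟨i', l'⟩
  | .c i l, .p i' l' => (⟨i, l⟩ : Σ i, Fin (maxCoord (s i))) = ⟨i', l'⟩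
  | .p i l, .q i' l' => (⟨i, l⟩ : Σ i, Fin (maxCoord (s i))) = ⟨i', l'⟩
  | .u j, .c i l => l ∈ sel j i
  | _, _ => False

/-- The MRSS construction (for the fixed choice `sel` of the neighbours of the
`u_j` among the vertices `c_i^l`). -/
def mrssGraph {k n : ℕ} (s : Fin n → Fin k → ℕ) (t : Fin k → ℕ)
    (sel : ∀ _ : Fin k, ∀ i : Fin n, Finset (Fin (maxCoord (s i)))) :
    SimpleGraph (MVert k n s t) :=
  SimpleGraph.fromRel (mrssRel sel)

/-- A minimum-weight signed Roman dominating function. -/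
def IsMinSRDF {V : Type*} [Fintype V] (G : SimpleGraph V) (f : V → ℤ) : Prop :=
  IsSRDF G f ∧ ∀ g : V → ℤ, IsSRDF G g → srdWeight f ≤ srdWeight g

open Finset

section SignedRomanDomination

variable {V : Type*} [Fintype V] {G : SimpleGraph V} {f f' : V → ℤ}

theorem closedNbrSum_le_closedNbrSum {u : V} (hle : ∀ v, v = u ∨ G.Adj u v → f v ≤ f' v) :
    closedNbrSum G f u ≤ closedNbrSum G f' u :=
  add_le_add (hle u (.inl rfl)) <| sum_le_sum fun v hv => hle v (.inr (mem_filter.1 hv).2)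

theorem closedNbrSum_eq_add_of_adj_iff {u w : V} (hu : ∀ v, G.Adj u v ↔ v = w) :
    closedNbrSum G f u = f u + f w := by
  have : univ.filter (fun v => G.Adj u v) = {w} := by ext v; simp [hu]
  rw [closedNbrSum, this, sum_singleton]

theorem IsSRDF.neg_one_le (hf : IsSRDF G f) (v : V) : -1 ≤ f v := by
  rcases hf.1 v with h | h | h <;> omega

theorem IsSRDF.le_two (hf : IsSRDF G f) (v : V) : f v ≤ 2 := by
  rcases hf.1 v with h | h | h <;> omega

theorem isSRDF_one (G : SimpleGraph V) : IsSRDF G 1 :=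
  ⟨fun _ => .inr (.inl rfl), fun _ => le_add_of_nonneg_right (sum_nonneg fun _ _ => zero_le_one),
    fun _ h => by norm_num at h⟩

theorem IsSRDF.neg_card_le_srdWeight (hf : IsSRDF G f) : -(Fintype.card V : ℤ) ≤ srdWeight f := by
  have := card_nsmul_le_sum univ f (-1) fun v _ => hf.neg_one_le v
  simpa [srdWeight] using this

theorem exists_isMinSRDF (G : SimpleGraph V) : ∃ f, IsMinSRDF G f := by
  obtain ⟨_, ⟨f, hf, rfl⟩, hmin⟩ := Int.exists_least_of_bdd
    (P := fun w => ∃ f : V → ℤ, IsSRDF G f ∧ srdWeight f = w)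
    ⟨_, by rintro _ ⟨f, hf, rfl⟩; exact hf.neg_card_le_srdWeight⟩ ⟨_, 1, isSRDF_one G, rfl⟩
  exact ⟨f, hf, fun g hg => hmin _ ⟨g, hg, rfl⟩⟩

end SignedRomanDomination

section PendantSwap

variable {V : Type*} {G : SimpleGraph V} {L H : Finset V} {f : V → ℤ}

structure LeavesSupportedBy (G : SimpleGraph V) (L H : Finset V) : Prop where
  disjoint : Disjoint L H
  leaf : ∀ l ∈ L, ∃ h ∈ H, ∀ v, G.Adj l v ↔ v = h
  support : ∀ h ∈ H, ∃ l ∈ L, G.Adj h l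

def pendantSwap (L H : Finset V) (f : V → ℤ) (v : V) : ℤ :=
  if v ∈ L then -1 else if v ∈ H then 2 else f v

theorem pendantSwap_of_mem_left {v : V} (hv : v ∈ L) : pendantSwap L H f v = -1 := if_pos hv

theorem pendantSwap_of_mem_right {v : V} (hL : v ∉ L) (hH : v ∈ H) : pendantSwap L H f v = 2 := by
  simp [pendantSwap, hL, hH]

theorem pendantSwap_of_not_mem {v : V} (hL : v ∉ L) (hH : v ∉ H) : pendantSwap L H f v = f v := by
  simp [pendantSwap, hL, hH]

theorem LeavesSupportedBy.pendantSwap_eq_two (hP : LeavesSupportedBy G L H) {h : V} (hh : h ∈ H) :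
    pendantSwap L H f h = 2 :=
  pendantSwap_of_mem_right (disjoint_right.1 hP.disjoint hh) hh

theorem LeavesSupportedBy.mem_right_of_adj (hP : LeavesSupportedBy G L H) {l v : V} (hl : l ∈ L)
    (hadj : G.Adj v l) : v ∈ H := by
  obtain ⟨h, hh, hl⟩ := hP.leaf l hl
  exact (hl v).1 hadj.symm ▸ hh

variable [Fintype V]

namespace LeavesSupportedBy

theorem le_pendantSwap (hP : LeavesSupportedBy G L H) (hf : IsSRDF G f) {v : V} (hv : v ∉ L) :
    f v ≤ pendantSwap L H f v := by
  by_cases hH : v ∈ H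
  · rw [hP.pendantSwap_eq_two hH]; exact hf.le_two v
  · rw [pendantSwap_of_not_mem hv hH]

theorem sum_two_sub_le_sum_add_one (hP : LeavesSupportedBy G L H) (hf : IsSRDF G f) :
    ∑ h ∈ H, (2 - f h) ≤ ∑ l ∈ L, (f l + 1) := by
  choose! σ hσL hσadj using hP.support
  have hσinj : Set.InjOn σ H := fun h hh h' hh' heq => by
    obtain ⟨w, -, hw⟩ := hP.leaf (σ h) (hσL h hh)
    rw [(hw h).1 (hσadj h hh).symm, (hw h').1 (heq ▸ (hσadj h' hh').symm)]
  calc ∑ h ∈ H, (2 - f h)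
      ≤ ∑ h ∈ H, (f (σ h) + 1) := sum_le_sum fun h hh => by
        obtain ⟨w, -, hw⟩ := hP.leaf (σ h) (hσL h hh)
        have := hf.2.1 (σ h)
        rw [closedNbrSum_eq_add_of_adj_iff hw, ← (hw h).1 (hσadj h hh).symm] at this
        linarith
    _ = ∑ l ∈ H.image σ, (f l + 1) := (sum_image (f := fun l => f l + 1) hσinj).symm
    _ ≤ ∑ l ∈ L, (f l + 1) := sum_le_sum_of_subset_of_nonneg
        (image_subset_iff.2 hσL) fun l _ _ => by linarith [hf.neg_one_le l]

theorem srdWeight_pendantSwap_le (hP : LeavesSupportedBy G L H) (hf : IsSRDF G f) :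
    srdWeight (pendantSwap L H f) ≤ srdWeight f := by
  have hdiff : ∑ v, (pendantSwap L H f v - f v) = ∑ h ∈ H, (2 - f h) - ∑ l ∈ L, (f l + 1) := by
    rw [← sum_subset (subset_univ (L ∪ H)) fun v _ hv => ?_, sum_union hP.disjoint]
    · rw [sum_congr rfl fun l hl => show pendantSwap L H f l - f l = -(f l + 1) by
          rw [pendantSwap_of_mem_left hl]; ring,
        sum_congr rfl fun h hh => show pendantSwap L H f h - f h = 2 - f h by
          rw [hP.pendantSwap_eq_two hh],
        sum_neg_distrib]
      ring
    · rw [mem_union, not_or] at hv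
      rw [pendantSwap_of_not_mem hv.1 hv.2, sub_self]
  rw [sum_sub_distrib] at hdiff
  unfold srdWeight
  linarith [hP.sum_two_sub_le_sum_add_one hf]

theorem isSRDF_pendantSwap (hP : LeavesSupportedBy G L H) (hf : IsSRDF G f)
    (hH : ∀ h ∈ H, 1 ≤ closedNbrSum G (pendantSwap L H f) h) : IsSRDF G (pendantSwap L H f) := by
  refine ⟨fun v => ?_, fun u => ?_, fun u hu => ?_⟩
  · unfold pendantSwap
    split_ifs
    exacts [.inl rfl, .inr (.inr rfl), hf.1 v]
  · by_cases hL : u ∈ L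
    · obtain ⟨h, hh, hadj⟩ := hP.leaf u hL
      rw [closedNbrSum_eq_add_of_adj_iff hadj, pendantSwap_of_mem_left hL, hP.pendantSwap_eq_two hh]
      norm_num
    by_cases huH : u ∈ H
    · exact hH u huH
    refine (hf.2.1 u).trans (closedNbrSum_le_closedNbrSum fun v hv => hP.le_pendantSwap hf ?_)
    rintro hvL
    rcases hv with rfl | hadj
    exacts [hL hvL, huH (hP.mem_right_of_adj hvL hadj)]
  · by_cases hL : u ∈ L
    · obtain ⟨h, hh, hadj⟩ := hP.leaf u hL
      exact ⟨h, (hadj h).2 rfl, hP.pendantSwap_eq_two hh⟩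
    have huH : u ∉ H := fun huH => by rw [hP.pendantSwap_eq_two huH] at hu; norm_num at hu
    rw [pendantSwap_of_not_mem hL huH] at hu
    obtain ⟨v, hadj, hv⟩ := hf.2.2 u hu
    have hvL : v ∉ L := fun hvL => huH (hP.mem_right_of_adj hvL hadj)
    refine ⟨v, hadj, ?_⟩
    by_cases hvH : v ∈ H
    exacts [hP.pendantSwap_eq_two hvH, (pendantSwap_of_not_mem hvL hvH).trans hv]

theorem isMinSRDF_pendantSwap (hP : LeavesSupportedBy G L H) (hf : IsMinSRDF G f)
    (hH : ∀ h ∈ H, 1 ≤ closedNbrSum G (pendantSwap L H f) h) : IsMinSRDF G (pendantSwap L H f) :=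
  ⟨hP.isSRDF_pendantSwap hf.1 hH, fun g hg => (hP.srdWeight_pendantSwap_le hf.1).trans (hf.2 g hg)⟩

end LeavesSupportedBy

end PendantSwap

section MRSS

variable {k n : ℕ} {s : Fin n → Fin k → ℕ} {t : Fin k → ℕ}
  {sel : ∀ _ : Fin k, ∀ i : Fin n, Finset (Fin (maxCoord (s i)))}

namespace MVert

theorem adj_r2_iff (j : Fin k) (z : MVert k n s t) : (mrssGraph s t sel).Adj (r2 j) z ↔ z = vv j := by
  cases z <;> simp [mrssGraph, mrssRel, eq_comm]

theorem adj_P_iff (j : Fin k) (e : Fin (fSize s t j)) (b : Fin 2) (z : MVert k n s t) :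
    (mrssGraph s t sel).Adj (P j e b) z ↔ z = F j e := by
  cases z <;> simp [mrssGraph, mrssRel, eq_comm]

theorem adj_F_iff (j : Fin k) (e : Fin (fSize s t j)) (z : MVert k n s t) :
    (mrssGraph s t sel).Adj (F j e) z ↔ z = vv j ∨ z = P j e 0 ∨ z = P j e 1 := by
  cases z <;> simp [mrssGraph, mrssRel, eq_comm]
  grind

theorem adj_vv_iff (j : Fin k) (z : MVert k n s t) :
    (mrssGraph s t sel).Adj (vv j) z ↔ z = r2 j ∨ (∃ d, z = D j d) ∨ ∃ e, z = F j e := by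
  cases z <;> simp [mrssGraph, mrssRel, eq_comm]
  all_goals rintro rfl; exact ⟨_, .rfl⟩

def IsR2OrP : MVert k n s t → Prop
  | r2 _ | P _ _ _ => True
  | _ => False

def IsVOrF : MVert k n s t → Prop
  | vv _ | F _ _ => True
  | _ => False

end MVert

open MVert

local notation "swap" => pendantSwap (univ.filter IsR2OrP) (univ.filter IsVOrF)

theorem leavesSupportedBy_mrssGraph :
    LeavesSupportedBy (mrssGraph s t sel) (univ.filter IsR2OrP) (univ.filter IsVOrF) where
  disjoint := disjoint_filter.2 fun v _ hl hh => by cases v <;> simp_all [IsR2OrP, IsVOrF]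
  leaf l hl := by
    cases l <;> simp [IsR2OrP] at hl
    case r2 j => exact ⟨vv j, by simp [IsVOrF], adj_r2_iff j⟩
    case P j e b => exact ⟨F j e, by simp [IsVOrF], adj_P_iff j e b⟩
  support h hh := by
    cases h <;> simp [IsVOrF] at hh
    case vv j => exact ⟨r2 j, by simp [IsR2OrP], ((adj_r2_iff j _).2 rfl).symm⟩
    case F j e => exact ⟨P j e 0, by simp [IsR2OrP], ((adj_P_iff j e 0 _).2 rfl).symm⟩

theorem closedNbrSum_swap_F (f : MVert k n s t → ℤ) (j : Fin k) (e : Fin (fSize s t j)) :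
    closedNbrSum (mrssGraph s t sel) (swap f) (F j e) = 2 := by
  have hN : univ.filter (fun z => (mrssGraph s t sel).Adj (F j e) z) = {vv j, P j e 0, P j e 1} := by
    ext z; simp [adj_F_iff]
  rw [closedNbrSum, hN, sum_insert (by simp), sum_pair (by simp)]
  simp [pendantSwap, IsR2OrP, IsVOrF]

theorem one_le_closedNbrSum_swap_vv {f : MVert k n s t → ℤ} (hf : ∀ v, -1 ≤ f v) (j : Fin k) :
    1 ≤ closedNbrSum (mrssGraph s t sel) (swap f) (vv j) := by
  have hN : univ.filter (fun z => (mrssGraph s t sel).Adj (vv j) z) =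
      insert (r2 j) (univ.image (D j) ∪ univ.image (F j)) := by
    ext z; simp [adj_vv_iff, eq_comm]
  rw [closedNbrSum, hN, sum_insert (by simp), sum_union (by simp [disjoint_left]),
    sum_image fun _ _ _ _ h => by cases h; rfl, sum_image fun _ _ _ _ h => by cases h; rfl]
  have hD : -(dSize s t j : ℤ) ≤ ∑ d, swap f (D j d) := by
    simpa using card_nsmul_le_sum univ (fun d => swap f (D j d)) (-1) fun d _ => by
      simpa [pendantSwap, IsR2OrP, IsVOrF] using hf (D j d)
  have hDF : dSize s t j ≤ 2 * fSize s t j := by unfold fSize; omega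
  simp [pendantSwap, IsR2OrP, IsVOrF] at hD ⊢
  omega

end MRSS

theorem mrss_min_srdf_F_P_general (k n : ℕ)
    (s : Fin n → Fin k → ℕ) (t : Fin k → ℕ)
    (sel : ∀ _ : Fin k, ∀ i : Fin n, Finset (Fin (maxCoord (s i)))) :
    ∃ f : MVert k n s t → ℤ, IsMinSRDF (mrssGraph s t sel) f ∧
      (∀ j e, f (MVert.F j e) = 2) ∧
      (∀ j e b, f (MVert.P j e b) = -1) := by
  obtain ⟨g, hg⟩ := exists_isMinSRDF (mrssGraph s t sel)
  refine ⟨pendantSwap (univ.filter MVert.IsR2OrP) (univ.filter MVert.IsVOrF) g,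
    leavesSupportedBy_mrssGraph.isMinSRDF_pendantSwap hg fun h hh => ?_,
    fun j e => by simp [pendantSwap, MVert.IsR2OrP, MVert.IsVOrF],
    fun j e b => by simp [pendantSwap, MVert.IsR2OrP]⟩
  cases h <;> simp [MVert.IsVOrF] at hh
  case vv j => exact one_le_closedNbrSum_swap_vv hg.1.neg_one_le j
  case F j e => exact (closedNbrSum_swap_F g j e).ge.trans' one_le_two

theorem mrss_min_srdf_F_P (k m n : ℕ) (hk : 1 ≤ k) (hm : 1 ≤ m) (hn : 1 ≤ n)
    (s : Fin n → Fin k → ℕ) (t : Fin k → ℕ) (hs : ∀ i, 1 ≤ maxCoord (s i))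
    (sel : ∀ _ : Fin k, ∀ i : Fin n, Finset (Fin (maxCoord (s i))))
    (hsel : ∀ j i, (sel j i).card = s i j) :
    ∃ f : MVert k n s t → ℤ, IsMinSRDF (mrssGraph s t sel) f ∧
      (∀ j e, f (MVert.F j e) = 2) ∧
      (∀ j e b, f (MVert.P j e b) = -1) :=
  mrss_min_srdf_F_P_general k n s t sel
end
end
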